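/- Let R be a noetherian local ring with maximal ideal m and S a nonzero Serre subcategory of the category of R-modules. If MP[S] contains at least two distinct prime ideals of height dim R − 1, then m belongs to MP[S]; in particular S contains every Artinian R-module. -/

import Mathlib

/-!
Common framework: a *Serre class* is a class of (bundled) `R`-modules closed under
submodules, quotient modules and extensions.  `MelkerssonCondition R P I` is the
Melkersson condition `(C_I)`: if `Γ_I(M) = M` (every element of `M` is annihilated by
some power of `I`) and `(0 :_M I)` (the `I`-torsion-by-`I` submodule `torsionBySet`)
belongs to the class, then `M` belongs to the class.  `MP R P` is the set of prime
ideals `p` such that the class satisfies `(C_p)`.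
-/

open CategoryTheory

structure SerreClass (R : Type) [CommRing R] where
  mem : ModuleCat.{0} R → Prop
  mem_of_injective : ∀ {M N : ModuleCat.{0} R} (f : M →ₗ[R] N),
    Function.Injective f → mem N → mem M
  mem_of_surjective : ∀ {M N : ModuleCat.{0} R} (f : M →ₗ[R] N),
    Function.Surjective f → mem M → mem N
  mem_of_extension : ∀ {A M B : ModuleCat.{0} R} (f : A →ₗ[R] M) (g : M →ₗ[R] B),
    Function.Injective f → Function.Surjective g →
    LinearMap.range f = LinearMap.ker g → mem A → mem B → mem M

variable (R : Type) [CommRing R]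

/-- `Γ_I(M) = M`: every element of `M` is annihilated by some power of `I`. -/
def IsTorsionByPowers (I : Ideal R) (M : ModuleCat.{0} R) : Prop :=
  ∀ m : M, ∃ n : ℕ, ∀ x ∈ I ^ n, x • m = 0

/-- The Melkersson condition `(C_I)` for a class `P` of `R`-modules:
if `Γ_I(M) = M` and `(0 :_M I) ∈ P` then `M ∈ P`. -/
def MelkerssonCondition (P : ModuleCat.{0} R → Prop) (I : Ideal R) : Prop :=
  ∀ M : ModuleCat.{0} R, IsTorsionByPowers R I M →
    P (ModuleCat.of R (Submodule.torsionBySet R M (I : Set R))) → P M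

/-- `MP[P]`: the set of prime ideals `p` such that `P` satisfies `(C_p)`. -/
def MP (P : ModuleCat.{0} R → Prop) : Set (PrimeSpectrum R) :=
  { p | MelkerssonCondition R P p.asIdeal }

/-- The class `FG` of finitely generated `R`-modules. -/
def FGClass : ModuleCat.{0} R → Prop := fun M => Module.Finite R M

/-- Membership in the extension subcategory `P * Q`: `M` fits in a short exact
sequence `0 → A → M → B → 0` with `A ∈ P` and `B ∈ Q`. -/
def IsExtensionIn (P Q : ModuleCat.{0} R → Prop) (M : ModuleCat.{0} R) : Prop :=
  ∃ (A B : ModuleCat.{0} R) (f : A →ₗ[R] M) (g : M →ₗ[R] B),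
    Function.Injective f ∧ Function.Surjective g ∧
    LinearMap.range f = LinearMap.ker g ∧ P A ∧ Q B

/-- `Supp(P) = ⋃_{M ∈ P} Supp_R M`. -/
def SuppClass (P : ModuleCat.{0} R → Prop) : Set (PrimeSpectrum R) :=
  ⋃ (M : ModuleCat.{0} R) (_ : P M), Module.support R M

/-- `E` is an injective hull of `N`: `E` is injective and contains `N` as an
essential submodule. -/
def IsInjectiveHull (N E : ModuleCat.{0} R) : Prop :=
  Module.Injective R E ∧ ∃ f : N →ₗ[R] E, Function.Injective f ∧
    ∀ W : Submodule R E, W ≠ ⊥ → W ⊓ LinearMap.range f ≠ ⊥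

/-- `M` is `I`-cofinite: `Supp M ⊆ V(I)` and `Ext^i_R(R/I, M)` is a finitely
generated `R`-module for every `i`. -/
noncomputable def IsCofiniteWrt (I : Ideal R) (M : ModuleCat.{0} R) : Prop :=
  Module.support R M ⊆ PrimeSpectrum.zeroLocus (I : Set R) ∧
  ∀ i : ℕ, Module.Finite R
    (((Ext R (ModuleCat.{0} R) i).obj (Opposite.op (ModuleCat.of R (R ⧸ I)))).obj M)

/-- A specialization closed subset of `Spec R`. -/
def SpecializationClosed (W : Set (PrimeSpectrum R)) : Prop :=
  ∀ p ∈ W, ∀ q : PrimeSpectrum R, p.asIdeal ≤ q.asIdeal → q ∈ W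

/-!
No prime lies strictly between `m` and a prime of height `dim R - 1`; for two distinct such
primes `p`, `q` this forces `√(p + q) = m`, hence `m ^ k ≤ p + q ≤ m` for some `k`. The conditions
`(C_p)` and `(C_q)` combine to `(C_{p+q})`, since for a `(p+q)`-torsion module `M` the submodule
`(0 :_M p)` is `q`-torsion with `(0 :_{(0 :_M p)} q) = (0 :_M p+q)`. To pass from `(C_J)` to
`(C_I)` when `I ^ k ≤ J ≤ I`, one shows that a module killed by `I ^ k` lies in `S` as soon as
`(0 :_M I)` does, by induction on `k`: multiplication by the generators of `I` embeds
`(0 :_{M/(0 :_M I)} I)` into a finite power of `(0 :_M I)`. Finally, the residue field is a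
subquotient of any nonzero module in `S`, so the finite-dimensional socle of an Artinian module
lies in `S`, and `(C_m)` applies because Artinian modules over a local ring are `m`-torsion.
-/

open IsLocalRing Submodule

namespace SerreClass

section

variable {R} (S : SerreClass R)
  {M N : Type} [AddCommGroup M] [Module R M] [AddCommGroup N] [Module R N]

lemma mem_of_linearEquiv (e : M ≃ₗ[R] N) (h : S.mem (ModuleCat.of R M)) :
    S.mem (ModuleCat.of R N) :=
  S.mem_of_injective (M := ModuleCat.of R N) (N := ModuleCat.of R M)
    e.symm.toLinearMap e.symm.injective h

lemma mem_of_subsingleton [Subsingleton M] (h : S.mem (ModuleCat.of R N)) :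
    S.mem (ModuleCat.of R M) :=
  S.mem_of_injective (M := ModuleCat.of R M) (N := ModuleCat.of R N)
    0 (Function.injective_of_subsingleton _) h

lemma mem_submodule (p : Submodule R M) (h : S.mem (ModuleCat.of R M)) :
    S.mem (ModuleCat.of R p) :=
  S.mem_of_injective (M := ModuleCat.of R p) (N := ModuleCat.of R M)
    p.subtype p.injective_subtype h

lemma mem_of_injective_of_forall_mem (p : Submodule R N) (f : M →ₗ[R] N)
    (hf : Function.Injective f) (hfp : ∀ x, f x ∈ p) (hp : S.mem (ModuleCat.of R p)) :
    S.mem (ModuleCat.of R M) :=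
  S.mem_of_injective (M := ModuleCat.of R M) (N := ModuleCat.of R p)
    (f.codRestrict p hfp) (fun _ _ h => hf (congrArg Subtype.val h)) hp

lemma mem_of_mem_submodule_of_mem_quotient (p : Submodule R M)
    (hp : S.mem (ModuleCat.of R p)) (hq : S.mem (ModuleCat.of R (M ⧸ p))) :
    S.mem (ModuleCat.of R M) :=
  S.mem_of_extension (A := ModuleCat.of R p) (M := ModuleCat.of R M)
    (B := ModuleCat.of R (M ⧸ p)) p.subtype p.mkQ p.injective_subtype p.mkQ_surjective
    (by rw [range_subtype, ker_mkQ]) hp hq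

lemma mem_prod (hM : S.mem (ModuleCat.of R M)) (hN : S.mem (ModuleCat.of R N)) :
    S.mem (ModuleCat.of R (M × N)) :=
  S.mem_of_extension (A := ModuleCat.of R M) (M := ModuleCat.of R (M × N))
    (B := ModuleCat.of R N) (LinearMap.inl R M N) (LinearMap.snd R M N)
    LinearMap.inl_injective LinearMap.snd_surjective (LinearMap.range_inl R M N) hM hN

lemma mem_pi_fin (h : S.mem (ModuleCat.of R M)) : ∀ n : ℕ, S.mem (ModuleCat.of R (Fin n → M))
  | 0 => S.mem_of_subsingleton h
  | n + 1 => S.mem_of_linearEquiv (Fin.consLinearEquiv R fun _ : Fin (n + 1) => M)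
      (S.mem_prod h (mem_pi_fin h n))

lemma mem_pi {ι : Type} [Finite ι] (h : S.mem (ModuleCat.of R M)) :
    S.mem (ModuleCat.of R (ι → M)) := by
  obtain ⟨n, ⟨e⟩⟩ := Finite.exists_equiv_fin ι
  exact S.mem_of_linearEquiv (LinearEquiv.funCongrLeft R M e) (S.mem_pi_fin h n)

lemma mem_torsionBySet_quotient_torsionBySet {I : Ideal R} (hI : I.FG)
    (h : S.mem (ModuleCat.of R (torsionBySet R M I))) :
    S.mem (ModuleCat.of R (torsionBySet R (M ⧸ torsionBySet R M I) I)) := by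
  obtain ⟨t, rfl⟩ := hI
  set N := torsionBySet R M (Ideal.span (t : Set R) : Set R)
  set T := torsionBySet R (M ⧸ N) (Ideal.span (t : Set R) : Set R)
  have hN (a : t) : N ≤ LinearMap.ker (a.1 • LinearMap.id) := fun x hx =>
    (mem_torsionBySet_iff _ x).mp hx ⟨a, Ideal.subset_span a.2⟩
  let μ (a : t) : (M ⧸ N) →ₗ[R] M := N.liftQ (a.1 • LinearMap.id) (hN a)
  have hμ (a : t) (x : T) : μ a x ∈ N := by
    refine (mem_torsionBySet_iff _ _).mpr fun b => ?_
    rw [← map_smul, (mem_torsionBySet_iff _ _).mp x.2 b, map_zero]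
  refine S.mem_of_injective (M := ModuleCat.of R T) (N := ModuleCat.of R (t → N))
    (LinearMap.pi fun a => ((μ a).comp T.subtype).codRestrict N (hμ a)) ?_ (S.mem_pi h)
  refine (injective_iff_map_eq_zero _).mpr fun x hx => ?_
  obtain ⟨z, hz⟩ := Submodule.Quotient.mk_surjective N x.1
  have hzN : z ∈ N := by
    rw [show N = _ from (torsionBySet_eq_torsionBySet_span _).symm, mem_torsionBySet_iff]
    intro a
    have h0 : μ a x = 0 := congrArg Subtype.val (congrFun hx a)
    rwa [← hz, liftQ_apply] at h0
  exact Subtype.ext (by rw [← hz, ZeroMemClass.coe_zero, Quotient.mk_eq_zero]; exact hzN)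

lemma mem_of_isTorsionBySet_pow {I : Ideal R} (hI : I.FG) (k : ℕ)
    (hM : Module.IsTorsionBySet R M (I ^ k : Ideal R))
    (h : S.mem (ModuleCat.of R (torsionBySet R M I))) : S.mem (ModuleCat.of R M) := by
  induction k generalizing M with
  | zero =>
    have : Subsingleton M := ⟨fun x y => by
      rw [← one_smul R x, ← one_smul R y, @hM x ⟨1, by simp⟩, @hM y ⟨1, by simp⟩]⟩
    exact S.mem_of_subsingleton h
  | succ k ih =>
    set N := torsionBySet R M I
    have hMN : Module.IsTorsionBySet R (M ⧸ N) (I ^ k : Ideal R) := by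
      refine (Module.isTorsionBySet_quotient_iff N _).mpr fun x a ha => ?_
      refine (mem_torsionBySet_iff _ _).mpr fun b => ?_
      rw [smul_smul]
      exact @hM x ⟨_, pow_succ' I k ▸ Ideal.mul_mem_mul b.2 ha⟩
    exact S.mem_of_mem_submodule_of_mem_quotient N h
      (ih hMN (S.mem_torsionBySet_quotient_torsionBySet hI h))

lemma mem_quotient_maximalIdeal [IsLocalRing R]
    (hS : ∃ M : ModuleCat.{0} R, S.mem M ∧ Nontrivial M) :
    S.mem (ModuleCat.of R (R ⧸ maximalIdeal R)) := by
  obtain ⟨M, hM, hnt⟩ := hS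
  obtain ⟨x, hx⟩ := exists_ne (0 : M)
  have hxm : Ideal.torsionOf R M x ≤ maximalIdeal R :=
    le_maximalIdeal fun h => hx ((Ideal.torsionOf_eq_top_iff R x).mp h)
  have hRx : S.mem (ModuleCat.of R (R ⧸ Ideal.torsionOf R M x)) :=
    S.mem_of_linearEquiv (Ideal.quotTorsionOfEquivSpanSingleton R M x).symm
      (S.mem_submodule _ hM)
  exact S.mem_of_surjective (M := ModuleCat.of R (R ⧸ Ideal.torsionOf R M x))
    (N := ModuleCat.of R (R ⧸ maximalIdeal R)) (factor hxm) (factor_surjective hxm) hRx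

lemma mem_torsionBySet_maximalIdeal [IsLocalRing R]
    (h : S.mem (ModuleCat.of R (R ⧸ maximalIdeal R))) [IsArtinian R M] :
    S.mem (ModuleCat.of R (torsionBySet R M (maximalIdeal R))) := by
  let _ : Field (R ⧸ maximalIdeal R) := Ideal.Quotient.field _
  set V := torsionBySet R M (maximalIdeal R)
  have : IsArtinian (R ⧸ maximalIdeal R) V := isArtinian_of_tower R inferInstance
  have : IsNoetherian (R ⧸ maximalIdeal R) V :=
    IsSemiprimaryRing.isNoetherian_iff_isArtinian.mpr this
  exact S.mem_of_linearEquiv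
    ((Module.finBasis (R ⧸ maximalIdeal R) V).equivFun.restrictScalars R).symm (S.mem_pi h)

end

end SerreClass

section

variable {R}

lemma IsTorsionByPowers.mono {I J : Ideal R} (hJI : J ≤ I) {M : ModuleCat.{0} R}
    (h : IsTorsionByPowers R I M) : IsTorsionByPowers R J M :=
  fun x => (h x).imp fun n hn a ha => hn a (Ideal.pow_right_mono hJI n ha)

lemma isTorsionByPowers_maximalIdeal_of_isArtinian [IsLocalRing R] (M : ModuleCat.{0} R)
    [IsArtinian R M] : IsTorsionByPowers R (maximalIdeal R) M := by
  intro x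
  have : IsArtinian R (R ⧸ Ideal.torsionOf R M x) :=
    isArtinian_of_linearEquiv (Ideal.quotTorsionOfEquivSpanSingleton R M x).symm
  have : IsArtinianRing (R ⧸ Ideal.torsionOf R M x) := isArtinian_of_tower R this
  obtain ⟨n, hn⟩ := exists_maximalIdeal_pow_le_of_isArtinianRing_quotient (Ideal.torsionOf R M x)
  exact ⟨n, fun a ha => hn ha⟩

namespace MelkerssonCondition

variable (S : SerreClass R) {I J : Ideal R}

lemma sup (hI : MelkerssonCondition R S.mem I) (hJ : MelkerssonCondition R S.mem J) :
    MelkerssonCondition R S.mem (I ⊔ J) := by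
  intro M hM hMIJ
  set N := torsionBySet R M I
  have hNJ : IsTorsionByPowers R J (ModuleCat.of R N) := fun x =>
    (hM.mono le_sup_right x.1).imp fun _ hn a ha => Subtype.ext (hn a ha)
  have hN : S.mem (ModuleCat.of R N) := by
    refine hJ _ hNJ (S.mem_of_injective_of_forall_mem _
      (N.subtype ∘ₗ (torsionBySet R N J).subtype)
      (N.injective_subtype.comp (torsionBySet R N J).injective_subtype) (fun x => ?_) hMIJ)
    refine (mem_torsionBySet_iff _ _).mpr fun a =>
      (show I ⊔ J ≤ Ideal.torsionOf R M x.1.1 from sup_le ?_ ?_) a.2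
    · exact fun b hb => (mem_torsionBySet_iff _ _).mp x.1.2 ⟨b, hb⟩
    · exact fun b hb => congrArg Subtype.val ((mem_torsionBySet_iff _ _).mp x.2 ⟨b, hb⟩)
  exact hI M (hM.mono le_sup_left) hN

lemma of_le_of_pow_le (hI : I.FG) (hJ : MelkerssonCondition R S.mem J) (hJI : J ≤ I) {k : ℕ}
    (hIJ : I ^ k ≤ J) : MelkerssonCondition R S.mem I := by
  intro M hM hMI
  set W := torsionBySet R M J
  have hW : Module.IsTorsionBySet R W (I ^ k : Ideal R) := fun x a =>
    Subtype.ext ((mem_torsionBySet_iff _ _).mp x.2 ⟨a, hIJ a.2⟩)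
  have hWI : S.mem (ModuleCat.of R (torsionBySet R W I)) :=
    S.mem_of_injective_of_forall_mem _ (W.subtype ∘ₗ (torsionBySet R W I).subtype)
      (W.injective_subtype.comp (torsionBySet R W I).injective_subtype)
      (fun x => (mem_torsionBySet_iff _ _).mpr fun a =>
        congrArg Subtype.val ((mem_torsionBySet_iff _ _).mp x.2 a)) hMI
  exact hJ M (hM.mono hJI) (S.mem_of_isTorsionBySet_pow hI k hW hWI)

end MelkerssonCondition

end

lemma Order.isMax_of_lt_of_height_add_one_eq_krullDim {α : Type*} [Preorder α] {a b : α}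
    (hfin : krullDim α ≠ ⊤) (ha : (height a : WithBot ℕ∞) + 1 = krullDim α) (hab : a < b) :
    IsMax b := by
  intro c hbc
  by_contra hcb
  have hac : height a + 1 + 1 ≤ height c := (add_le_add_left (height_add_one_le hab) 1).trans
    (height_add_one_le (lt_of_le_not_ge hbc hcb))
  have hc : (height c : WithBot ℕ∞) ≤ height a + 1 := ha ▸ height_le_krullDim c
  obtain ⟨n, hn⟩ : ∃ n : ℕ, (n : ℕ∞) = height a :=
    ENat.ne_top_iff_exists.mp fun h => hfin (by rw [← ha, h]; rfl)
  rw [← hn] at hac hc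
  have : ((n + 1 + 1 : ℕ) : ℕ∞) ≤ (n + 1 : ℕ) := by
    push_cast
    exact hac.trans (WithBot.coe_le_coe.mp hc)
  norm_cast at this
  omega

section

variable {R} [IsLocalRing R] [FiniteRingKrullDim R]

lemma eq_maximalIdeal_of_lt_of_height_add_one_eq_ringKrullDim {p : PrimeSpectrum R}
    (hp : (Order.height p : WithBot ℕ∞) + 1 = ringKrullDim R) {J : Ideal R} [hJ : J.IsPrime]
    (hpJ : p.asIdeal < J) : J = maximalIdeal R :=
  have : J.IsMaximal := PrimeSpectrum.isMax_iff.mp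
    (Order.isMax_of_lt_of_height_add_one_eq_krullDim (b := ⟨J, hJ⟩) ringKrullDim_ne_top hp hpJ)
  eq_maximalIdeal this

lemma maximalIdeal_le_radical_sup_of_height_add_one_eq_ringKrullDim {p q : PrimeSpectrum R}
    (hpq : p ≠ q) (hp : (Order.height p : WithBot ℕ∞) + 1 = ringKrullDim R)
    (hq : (Order.height q : WithBot ℕ∞) + 1 = ringKrullDim R) :
    maximalIdeal R ≤ (p.asIdeal ⊔ q.asIdeal).radical := by
  rw [Ideal.radical_eq_sInf]
  refine le_sInf fun J ⟨hpqJ, hJ⟩ => ?_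
  rcases (le_sup_left.trans hpqJ).lt_or_eq with hpJ | rfl
  · exact (eq_maximalIdeal_of_lt_of_height_add_one_eq_ringKrullDim hp hpJ).ge
  · have hqp : q.asIdeal < p.asIdeal :=
      (le_sup_right.trans hpqJ).lt_of_ne fun h => hpq (PrimeSpectrum.ext h).symm
    exact (eq_maximalIdeal_of_lt_of_height_add_one_eq_ringKrullDim hq hqp).ge

end

/-- Over a noetherian local ring, if a nonzero Serre class `S` has two distinct primes
of height `dim R - 1` in `MP[S]`, then the maximal ideal lies in `MP[S]`; in particular
`S` contains every Artinian module. -/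
theorem stmt_4 {R : Type} [CommRing R] [IsNoetherianRing R] [IsLocalRing R]
    (S : SerreClass R) (hS : ∃ M : ModuleCat.{0} R, S.mem M ∧ Nontrivial M)
    (p q : PrimeSpectrum R) (hpq : p ≠ q)
    (hp : (Order.height p : WithBot ℕ∞) + 1 = ringKrullDim R)
    (hq : (Order.height q : WithBot ℕ∞) + 1 = ringKrullDim R)
    (hpMP : p ∈ MP R S.mem) (hqMP : q ∈ MP R S.mem) :
    MelkerssonCondition R S.mem (IsLocalRing.maximalIdeal R) ∧
    ∀ M : ModuleCat.{0} R, IsArtinian R M → S.mem M := by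
  obtain ⟨k, hk⟩ := Ideal.exists_pow_le_of_le_radical_of_fg
    (maximalIdeal_le_radical_sup_of_height_add_one_eq_ringKrullDim hpq hp hq)
    (IsNoetherian.noetherian _)
  have hpq_le : p.asIdeal ⊔ q.asIdeal ≤ maximalIdeal R :=
    sup_le (le_maximalIdeal p.2.ne_top) (le_maximalIdeal q.2.ne_top)
  have hC : MelkerssonCondition R S.mem (maximalIdeal R) :=
    (MelkerssonCondition.sup S hpMP hqMP).of_le_of_pow_le S (IsNoetherian.noetherian _) hpq_le hk
  exact ⟨hC, fun M _ => hC M (isTorsionByPowers_maximalIdeal_of_isArtinian M)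
    (S.mem_torsionBySet_maximalIdeal (S.mem_quotient_maximalIdeal hS))⟩
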